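/- arXiv:2109.02196 — 2 statements merged into one kernel-verified Lean document; each statement's English description precedes it below -/
import Mathlib

section
/- Functions from an atomic quantum set {H_d} to a classical quantum set `S correspond to projective measurements: a family of subspaces F(H_d, ℂ_s) ⊆ L(H_d, ℂ) for s ∈ S defines a function (F∘F† ≤ I, F†∘F ≥ I) if and only if there exists a family of projections (p_s)_{s∈S} on H_d with Σ_s p_s = 1 and p_s·p_t = 0 for s ≠ t such that, for each s ∈ S, F(H_d,ℂ_s) = L(H_d,ℂ)·p_s = {v ∈ H_d* : v = v·p_s}. -/
open Matrix

/-- A quantum relation between quantum sets: atom index types `ι`, `κ` with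
dimension functions `a`, `b`; an entrywise choice of operator subspaces,
operators `L(X,Y)` represented as matrices. -/
abbrev QRel (ι κ : Type) (a : ι → ℕ) (b : κ → ℕ) : Type :=
  ∀ (X : ι) (Y : κ), Submodule ℂ (Matrix (Fin (b Y)) (Fin (a X)) ℂ)

/-- Composition of quantum relations: entrywise span of products over
intermediate atoms. -/
noncomputable def qComp {ι κ μ : Type} {a : ι → ℕ} {b : κ → ℕ} {c : μ → ℕ}
    (S : QRel κ μ b c) (R : QRel ι κ a b) : QRel ι μ a c :=
  fun X Z => Submodule.span ℂ
    {t | ∃ (Y : κ) (r : Matrix (Fin (b Y)) (Fin (a X)) ℂ)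
        (s : Matrix (Fin (c Z)) (Fin (b Y)) ℂ),
        r ∈ R X Y ∧ s ∈ S Y Z ∧ t = s * r}

/-- Adjoint of a quantum relation: entrywise conjugate transpose. -/
noncomputable def qAdj {ι κ : Type} {a : ι → ℕ} {b : κ → ℕ} (R : QRel ι κ a b) : QRel κ ι b a :=
  fun Y X =>
  { carrier := {g | gᴴ ∈ R X Y}
    add_mem' := fun hx hy => by
      simpa [Matrix.conjTranspose_add] using (R X Y).add_mem hx hy
    zero_mem' := by simpa using (R X Y).zero_mem
    smul_mem' := fun c x hx => by
      simpa [Matrix.conjTranspose_smul] using (R X Y).smul_mem (star c) hx }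

/-- The identity quantum relation: `ℂ·1` on the diagonal, `0` elsewhere. -/
noncomputable def qId (ι : Type) (a : ι → ℕ) : QRel ι ι a a :=
  fun X X' => Submodule.span ℂ
    {m | X = X' ∧ ∀ i j, m i j = if (i : ℕ) = (j : ℕ) then 1 else 0}

/-- A quantum relation is a function when `F∘F† ≤ I` and `F†∘F ≥ I`. -/
def qIsFunc {ι κ : Type} {a : ι → ℕ} {b : κ → ℕ} (F : QRel ι κ a b) : Prop :=
  qComp F (qAdj F) ≤ qId κ b ∧ qId ι a ≤ qComp (qAdj F) F

/-- A quantum partial order: reflexive, transitive, antisymmetric. -/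
def qIsOrder {ι : Type} {a : ι → ℕ} (R : QRel ι ι a a) : Prop :=
  qId ι a ≤ R ∧ qComp R R ≤ R ∧ R ⊓ qAdj R ≤ qId ι a

/-- The order on functions into a quantum poset `(𝒳,R)`: `F ⊑ G` iff `G ≤ R∘F`. -/
def qFunLE {ι κ : Type} {a : ι → ℕ} {b : κ → ℕ} (R : QRel κ κ b b)
    (F G : QRel ι κ a b) : Prop :=
  G ≤ qComp R F

noncomputable section QMeasAux

/-- Row vectors as Euclidean space. -/
def rowE (d : ℕ) : Matrix (Fin 1) (Fin d) ℂ ≃ₗ[ℂ] EuclideanSpace ℂ (Fin d) where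
  toFun m := WithLp.toLp 2 (fun j => m 0 j)
  invFun x := Matrix.of fun _ j => x j
  map_add' := fun _ _ => rfl
  map_smul' := fun _ _ => rfl
  left_inv := fun m => by
    ext i j
    have : i = 0 := Subsingleton.elim _ _
    subst this; rfl
  right_inv := fun x => rfl

lemma mul_conjTranspose_eq {d : ℕ} (x y : Matrix (Fin 1) (Fin d) ℂ) :
    x * yᴴ = (inner ℂ (rowE d y) (rowE d x) : ℂ) • 1 := by
  ext i j
  have hi : i = 0 := Subsingleton.elim _ _
  have hj : j = 0 := Subsingleton.elim _ _
  subst hi; subst hj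
  simp [Matrix.mul_apply, PiLp.inner_apply, RCLike.inner_apply, rowE, mul_comm]
  rfl

/-- The matrix (acting on row vectors on the right) of the orthogonal
projection onto a subspace `W`. -/
def projM {d : ℕ} (W : Submodule ℂ (EuclideanSpace ℂ (Fin d))) : Matrix (Fin d) (Fin d) ℂ :=
  ∑ k : Fin (Module.finrank ℂ W),
    ((rowE d).symm (stdOrthonormalBasis ℂ W k))ᴴ * (rowE d).symm (stdOrthonormalBasis ℂ W k)

lemma projM_herm {d : ℕ} (W : Submodule ℂ (EuclideanSpace ℂ (Fin d))) :
    (projM W)ᴴ = projM W := by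
  simp [projM, Matrix.conjTranspose_sum, Matrix.conjTranspose_mul]

lemma mul_projM {d : ℕ} (W : Submodule ℂ (EuclideanSpace ℂ (Fin d)))
    (v : Matrix (Fin 1) (Fin d) ℂ) :
    v * projM W = ∑ k : Fin (Module.finrank ℂ W),
      (v * ((rowE d).symm (stdOrthonormalBasis ℂ W k))ᴴ) *
        (rowE d).symm (stdOrthonormalBasis ℂ W k) := by
  simp [projM, Matrix.mul_sum, Matrix.mul_assoc]

lemma mul_projM_eq_zero {d : ℕ} (W : Submodule ℂ (EuclideanSpace ℂ (Fin d)))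
    (v : Matrix (Fin 1) (Fin d) ℂ)
    (h : ∀ u : Matrix (Fin 1) (Fin d) ℂ, rowE d u ∈ W → v * uᴴ = 0) :
    v * projM W = 0 := by
  rw [mul_projM]
  apply Finset.sum_eq_zero
  intro k _
  rw [h _ (by simp), Matrix.zero_mul]

lemma mul_projM_mem {d : ℕ} (W : Submodule ℂ (EuclideanSpace ℂ (Fin d)))
    (v : Matrix (Fin 1) (Fin d) ℂ) :
    rowE d (v * projM W) ∈ W := by
  rw [mul_projM, map_sum]
  apply Submodule.sum_mem
  intro k _
  rw [mul_conjTranspose_eq, Matrix.smul_mul, Matrix.one_mul, _root_.map_smul]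
  simp only [LinearEquiv.apply_symm_apply]
  exact W.smul_mem _ (SetLike.coe_mem _)

lemma mul_projM_self {d : ℕ} (W : Submodule ℂ (EuclideanSpace ℂ (Fin d)))
    (w : Matrix (Fin 1) (Fin d) ℂ) (hw : rowE d w ∈ W) : w * projM W = w := by
  rw [mul_projM]
  have key : ∑ k : Fin (Module.finrank ℂ W),
      (inner ℂ ((stdOrthonormalBasis ℂ W k : EuclideanSpace ℂ (Fin d))) (rowE d w) : ℂ) •
        ((stdOrthonormalBasis ℂ W k : EuclideanSpace ℂ (Fin d))) = rowE d w := by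
    have := (stdOrthonormalBasis ℂ W).sum_repr ⟨rowE d w, hw⟩
    have h2 := congrArg (Submodule.subtype W) this
    rw [map_sum] at h2
    simp only [Submodule.subtype_apply, Submodule.coe_smul] at h2
    convert h2 using 2 with k
    rw [(stdOrthonormalBasis ℂ W).repr_apply_apply]
    rfl
  apply (rowE d).injective
  rw [map_sum]
  calc ∑ k : Fin (Module.finrank ℂ W), rowE d
        ((w * ((rowE d).symm (stdOrthonormalBasis ℂ W k))ᴴ) *
          (rowE d).symm (stdOrthonormalBasis ℂ W k))
      = ∑ k : Fin (Module.finrank ℂ W),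
        (inner ℂ ((stdOrthonormalBasis ℂ W k : EuclideanSpace ℂ (Fin d))) (rowE d w) : ℂ) •
          ((stdOrthonormalBasis ℂ W k : EuclideanSpace ℂ (Fin d))) := by
        apply Finset.sum_congr rfl
        intro k _
        rw [mul_conjTranspose_eq, Matrix.smul_mul, Matrix.one_mul, _root_.map_smul]
        simp
    _ = rowE d w := key

lemma projM_eq_sum {d : ℕ} (W : Submodule ℂ (EuclideanSpace ℂ (Fin d))) :
    projM W = ∑ k : Fin (Module.finrank ℂ W),
      ((rowE d).symm (stdOrthonormalBasis ℂ W k))ᴴ * (rowE d).symm (stdOrthonormalBasis ℂ W k) :=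
  rfl

lemma projM_mul_projM_self {d : ℕ} (W : Submodule ℂ (EuclideanSpace ℂ (Fin d))) :
    projM W * projM W = projM W := by
  nth_rewrite 1 [projM_eq_sum]
  rw [Finset.sum_mul]
  conv_rhs => rw [projM_eq_sum]
  apply Finset.sum_congr rfl
  intro k _
  rw [Matrix.mul_assoc, mul_projM_self _ _ (by simp)]

lemma projM_mul_projM_zero {d : ℕ} (W W' : Submodule ℂ (EuclideanSpace ℂ (Fin d)))
    (h : ∀ u u' : Matrix (Fin 1) (Fin d) ℂ, rowE d u ∈ W → rowE d u' ∈ W' → u * u'ᴴ = 0) :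
    projM W * projM W' = 0 := by
  nth_rewrite 1 [projM_eq_sum]
  rw [Finset.sum_mul]
  apply Finset.sum_eq_zero
  intro k _
  rw [Matrix.mul_assoc, mul_projM_eq_zero _ _ (fun u' hu' => h _ u' (by simp) hu'),
    Matrix.mul_zero]

lemma projM_bot {d : ℕ} : projM (⊥ : Submodule ℂ (EuclideanSpace ℂ (Fin d))) = 0 := by
  have h0 : Module.finrank ℂ (⊥ : Submodule ℂ (EuclideanSpace ℂ (Fin d))) = 0 := by
    simp
  haveI : IsEmpty (Fin (Module.finrank ℂ (⊥ : Submodule ℂ (EuclideanSpace ℂ (Fin d))))) := by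
    rw [h0]; infer_instance
  rw [projM, Finset.univ_eq_empty, Finset.sum_empty]

/-- Right multiplication by a fixed matrix, as a linear map on row vectors. -/
def mulRightLin {d : ℕ} (p : Matrix (Fin d) (Fin d) ℂ) :
    Matrix (Fin 1) (Fin d) ℂ →ₗ[ℂ] Matrix (Fin 1) (Fin d) ℂ where
  toFun v := v * p
  map_add' a b := Matrix.add_mul a b p
  map_smul' c a := by simp [Matrix.smul_mul]

lemma mem_span_mulRight {d : ℕ} {p : Matrix (Fin d) (Fin d) ℂ}
    {m : Matrix (Fin 1) (Fin d) ℂ} :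
    m ∈ Submodule.span ℂ {m : Matrix (Fin 1) (Fin d) ℂ | ∃ v, m = v * p} ↔ ∃ v, m = v * p := by
  have hset : {m : Matrix (Fin 1) (Fin d) ℂ | ∃ v, m = v * p} =
      ↑(LinearMap.range (mulRightLin p)) := by
    ext x
    simp [mulRightLin, eq_comm, LinearMap.mem_range]
    exact Iff.rfl
  rw [hset, Submodule.span_eq, LinearMap.mem_range]
  constructor
  · rintro ⟨v, rfl⟩; exact ⟨v, rfl⟩
  · rintro ⟨v, rfl⟩; exact ⟨v, rfl⟩

/-- The `i`-th row of a square matrix as a row vector. -/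
def rowOf {d : ℕ} (q : Matrix (Fin d) (Fin d) ℂ) (i : Fin d) : Matrix (Fin 1) (Fin d) ℂ :=
  Matrix.of fun _ j => q i j

lemma rowOf_eq_mul {d : ℕ} (q : Matrix (Fin d) (Fin d) ℂ) (i : Fin d) :
    rowOf q i = (Matrix.of fun (_ : Fin 1) k => if k = i then (1 : ℂ) else 0) * q := by
  ext a j
  simp [rowOf, Matrix.mul_apply, ite_mul]

lemma conjTranspose_mul_self_eq {d : ℕ} (q : Matrix (Fin d) (Fin d) ℂ) :
    qᴴ * q = ∑ i : Fin d, (rowOf q i)ᴴ * rowOf q i := by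
  ext a b
  simp [Matrix.sum_apply, Matrix.mul_apply, Matrix.conjTranspose_apply, rowOf,
    Fin.sum_univ_one]

lemma span_one_cond_top (P : Prop) (hP : P) :
    Submodule.span ℂ {m : Matrix (Fin 1) (Fin 1) ℂ |
      P ∧ ∀ i j, m i j = if (i : ℕ) = (j : ℕ) then 1 else 0} = ⊤ := by
  rw [eq_top_iff]
  intro m _
  have hgen : (1 : Matrix (Fin 1) (Fin 1) ℂ) ∈ {m : Matrix (Fin 1) (Fin 1) ℂ |
      P ∧ ∀ i j, m i j = if (i : ℕ) = (j : ℕ) then 1 else 0} := by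
    refine ⟨hP, fun i j => ?_⟩
    have hi : i = 0 := Subsingleton.elim _ _
    have hj : j = 0 := Subsingleton.elim _ _
    subst hi; subst hj
    simp
  have hm : m = m 0 0 • (1 : Matrix (Fin 1) (Fin 1) ℂ) := by
    ext i j
    have hi : i = 0 := Subsingleton.elim _ _
    have hj : j = 0 := Subsingleton.elim _ _
    subst hi; subst hj
    simp
  rw [hm]
  exact Submodule.smul_mem _ _ (Submodule.subset_span hgen)

end QMeasAux

/-- Functions from the atomic quantum set `{H_d}` to a classical quantum set
``S` are exactly projective measurements: `F` is a function iff there is a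
family of pairwise orthogonal self-adjoint projections `(p_s)` summing to the
identity with `F(H_d, ℂ_s) = L(H_d, ℂ)·p_s`. -/
theorem qIsFunc_iff_projective_measurement (d : ℕ) (S : Type)
    (F : QRel PUnit S (fun _ => d) (fun _ => 1)) :
    qIsFunc F ↔
      ∃ p : S → Matrix (Fin d) (Fin d) ℂ,
        (∀ s, (p s)ᴴ = p s ∧ p s * p s = p s) ∧
        (∀ s t, s ≠ t → p s * p t = 0) ∧
        (∑ᶠ s, p s) = 1 ∧
        ∀ s, F PUnit.unit s =
          Submodule.span ℂ
            {m : Matrix (Fin 1) (Fin d) ℂ |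
              ∃ v : Matrix (Fin 1) (Fin d) ℂ, m = v * p s} := by
  classical
  constructor
  · rintro ⟨h1, h2⟩
    set W : S → Submodule ℂ (EuclideanSpace ℂ (Fin d)) :=
      fun s => (F PUnit.unit s).map (rowE d).toLinearMap with hW
    have memW : ∀ (s : S) (u : Matrix (Fin 1) (Fin d) ℂ),
        rowE d u ∈ W s ↔ u ∈ F PUnit.unit s := by
      intro s u
      constructor
      · rintro ⟨x, hx, hxu⟩
        have : x = u := (rowE d).injective hxu
        rwa [← this]
      · intro hu; exact ⟨u, hu, rfl⟩
    have horth : ∀ {s t : S}, s ≠ t → ∀ {w v : Matrix (Fin 1) (Fin d) ℂ},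
        w ∈ F PUnit.unit t → v ∈ F PUnit.unit s → w * vᴴ = 0 := by
      intro s t hst w v hw hv
      have hva : vᴴ ∈ qAdj F s PUnit.unit := by
        show (vᴴ)ᴴ ∈ F PUnit.unit s
        rwa [Matrix.conjTranspose_conjTranspose]
      have hmem : w * vᴴ ∈ qComp F (qAdj F) s t :=
        Submodule.subset_span ⟨PUnit.unit, vᴴ, w, hva, hw, rfl⟩
      have hid := h1 s t hmem
      have hempty : {m : Matrix (Fin 1) (Fin 1) ℂ |
          s = t ∧ ∀ i j, m i j = if (i : ℕ) = (j : ℕ) then 1 else 0} = ∅ := by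
        ext m; simp [hst]
      rw [qId, hempty, Submodule.span_empty, Submodule.mem_bot] at hid
      exact hid
    -- extract a finite decomposition of 1
    have hone : (1 : Matrix (Fin d) (Fin d) ℂ) ∈ qComp (qAdj F) F PUnit.unit PUnit.unit := by
      apply h2
      apply Submodule.subset_span
      exact ⟨rfl, fun i j => by simp [Matrix.one_apply, Fin.val_eq_val]⟩
    obtain ⟨n, c, g, hg⟩ := Submodule.mem_span_set'.mp hone
    choose Y r s' hr hs' hgeq using fun i => (g i).2
    have hgsum : ∑ i, c i • (s' i * r i) = 1 := by
      rw [← hg]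
      exact Finset.sum_congr rfl fun i _ => by rw [hgeq i]
    set T : Finset S := Finset.image Y Finset.univ with hT
    have hYT : ∀ i, Y i ∈ T := fun i => Finset.mem_image_of_mem _ (Finset.mem_univ i)
    have hVbot : ∀ s, s ∉ T → F PUnit.unit s = ⊥ := by
      intro s hs
      rw [eq_bot_iff]
      intro w hw
      rw [Submodule.mem_bot]
      have hws : ∀ i, w * s' i = 0 := by
        intro i
        have hne : Y i ≠ s := fun h => hs (h ▸ hYT i)
        have : w * ((s' i)ᴴ)ᴴ = 0 := horth hne hw (hs' i)
        rwa [Matrix.conjTranspose_conjTranspose] at this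
      calc w = w * 1 := (Matrix.mul_one w).symm
        _ = w * ∑ i, c i • (s' i * r i) := by rw [hgsum]
        _ = ∑ i, c i • (w * s' i * r i) := by
            rw [Matrix.mul_sum]
            exact Finset.sum_congr rfl fun i _ => by
              rw [Matrix.mul_smul, Matrix.mul_assoc]
        _ = 0 := Finset.sum_eq_zero fun i _ => by rw [hws i, Matrix.zero_mul, smul_zero]
    have hp0 : ∀ s, s ∉ T → projM (W s) = 0 := by
      intro s hs
      show projM ((F PUnit.unit s).map (rowE d).toLinearMap) = 0
      rw [hVbot s hs, Submodule.map_bot, projM_bot]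
    have hrP : ∀ i, r i * (∑ s ∈ T, projM (W s)) = r i := by
      intro i
      rw [Matrix.mul_sum, Finset.sum_eq_single_of_mem (Y i) (hYT i)]
      · exact mul_projM_self _ _ ((memW _ _).mpr (hr i))
      · intro t htT hne
        apply mul_projM_eq_zero
        intro u hu
        exact horth hne (hr i) ((memW t u).mp hu)
    have hPsum : ∑ s ∈ T, projM (W s) = 1 := by
      have h1P : (1 : Matrix (Fin d) (Fin d) ℂ) * (∑ s ∈ T, projM (W s)) =
          ∑ s ∈ T, projM (W s) := Matrix.one_mul _
      calc ∑ s ∈ T, projM (W s) = 1 * (∑ s ∈ T, projM (W s)) := (Matrix.one_mul _).symm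
        _ = (∑ i, c i • (s' i * r i)) * (∑ s ∈ T, projM (W s)) := by rw [hgsum]
        _ = ∑ i, c i • (s' i * r i) := by
            rw [Finset.sum_mul]
            exact Finset.sum_congr rfl fun i _ => by
              rw [Matrix.smul_mul, Matrix.mul_assoc, hrP i]
        _ = 1 := hgsum
    refine ⟨fun s => projM (W s),
      fun s => ⟨projM_herm _, projM_mul_projM_self _⟩, ?_, ?_, ?_⟩
    · intro s t hst
      apply projM_mul_projM_zero
      intro u u' hu hu'
      exact horth (Ne.symm hst) ((memW s u).mp hu) ((memW t u').mp hu')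
    · rw [finsum_eq_finset_sum_of_support_subset _ (s := T)]
      · exact hPsum
      · intro s hs
        by_contra hsT
        exact hs (hp0 s hsT)
    · intro s
      apply le_antisymm
      · intro w hw
        exact Submodule.subset_span ⟨w, (mul_projM_self _ _ ((memW s w).mpr hw)).symm⟩
      · rw [Submodule.span_le]
        rintro m ⟨v, rfl⟩
        exact (memW s _).mp (mul_projM_mem _ _)
  · rintro ⟨p, hproj, horto, hsum, hF⟩
    have memF : ∀ (s : S) (m : Matrix (Fin 1) (Fin d) ℂ),
        m ∈ F PUnit.unit s ↔ ∃ v : Matrix (Fin 1) (Fin d) ℂ, m = v * p s := by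
      intro s m
      rw [hF s]
      exact mem_span_mulRight
    constructor
    · intro X Z
      by_cases hXZ : X = Z
      · subst hXZ
        exact le_top.trans (span_one_cond_top (X = X) rfl).ge
      · refine Submodule.span_le.mpr ?_
        rintro t ⟨Y, rr, ss, hrr, hss, rfl⟩
        have hrr' : rrᴴ ∈ F PUnit.unit X := hrr
        obtain ⟨a, ha⟩ := (memF X rrᴴ).mp hrr'
        obtain ⟨b, hb⟩ := (memF Z ss).mp hss
        have hrrval : rr = p X * aᴴ := by
          calc rr = (rrᴴ)ᴴ := (Matrix.conjTranspose_conjTranspose rr).symm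
            _ = (a * p X)ᴴ := by rw [ha]
            _ = (p X)ᴴ * aᴴ := Matrix.conjTranspose_mul a (p X)
            _ = p X * aᴴ := by rw [(hproj X).1]
        have : ss * rr = 0 := by
          rw [hb, hrrval, Matrix.mul_assoc, ← Matrix.mul_assoc (p Z),
            horto Z X (fun h => hXZ h.symm), Matrix.zero_mul, Matrix.mul_zero]
        rw [this]
        exact Submodule.zero_mem _
    · intro X Z
      refine Submodule.span_le.mpr ?_
      rintro m ⟨-, hm⟩
      have hm1 : m = 1 := by
        ext i j
        rw [hm]
        simp [Matrix.one_apply, Fin.val_eq_val]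
      rw [hm1]
      show (1 : Matrix (Fin d) (Fin d) ℂ) ∈ qComp (qAdj F) F X Z
      by_cases hfin : (Function.support p).Finite
      · have h1T : (1 : Matrix (Fin d) (Fin d) ℂ) = ∑ s ∈ hfin.toFinset, p s := by
          rw [← hsum, finsum_eq_sum p hfin]
        rw [h1T]
        apply Submodule.sum_mem
        intro s _
        have hps : p s = ∑ i : Fin d, (rowOf (p s) i)ᴴ * rowOf (p s) i := by
          have h3 := conjTranspose_mul_self_eq (p s)
          rw [(hproj s).1, (hproj s).2] at h3
          exact h3
        rw [hps]
        apply Submodule.sum_mem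
        intro i _
        apply Submodule.subset_span
        refine ⟨s, rowOf (p s) i, (rowOf (p s) i)ᴴ, ?_, ?_, rfl⟩
        · exact (memF s _).mpr ⟨_, rowOf_eq_mul _ _⟩
        · show ((rowOf (p s) i)ᴴ)ᴴ ∈ F PUnit.unit s
          rw [Matrix.conjTranspose_conjTranspose]
          exact (memF s _).mpr ⟨_, rowOf_eq_mul _ _⟩
      · exfalso
        have h0 : (∑ᶠ s, p s) = 0 := finsum_of_infinite_support hfin
        rw [hsum] at h0
        -- support is empty hence finite.
        apply hfin
        have : ∀ s, p s = 0 := fun s => by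
          calc p s = p s * p s := ((hproj s).2).symm
            _ = p s * (p s * 1) := by rw [Matrix.mul_one]
            _ = p s * (p s * 0) := by rw [h0]
            _ = 0 := by rw [Matrix.mul_zero, Matrix.mul_zero]
        rw [show Function.support p = ∅ from Function.support_eq_empty_iff.mpr (funext this)]
        exact Set.finite_empty
end

section
/- If (𝒳, R) is a quantum poset and 𝒲 is any quantum set, then the relation ⊑ on functions F, G : 𝒲 → 𝒳 defined by F ⊑ G iff G ≤ R ∘ F is a partial order on the set of functions from 𝒲 to 𝒳. -/
open Matrix

section Lemmas
variable {ι κ μ ν : Type} {a : ι → ℕ} {b : κ → ℕ} {c : μ → ℕ} {d : ν → ℕ}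

lemma mul_mem_qComp {S : QRel κ μ b c} {R : QRel ι κ a b} {X : ι} {Y : κ} {Z : μ}
    {r : Matrix (Fin (b Y)) (Fin (a X)) ℂ} {s : Matrix (Fin (c Z)) (Fin (b Y)) ℂ}
    (hr : r ∈ R X Y) (hs : s ∈ S Y Z) : s * r ∈ qComp S R X Z :=
  Submodule.subset_span ⟨Y, r, s, hr, hs, rfl⟩

lemma qComp_mono {S S' : QRel κ μ b c} {R R' : QRel ι κ a b}
    (hS : S ≤ S') (hR : R ≤ R') : qComp S R ≤ qComp S' R' := by
  intro X Z
  apply Submodule.span_mono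
  rintro t ⟨Y, r, s, hr, hs, rfl⟩
  exact ⟨Y, r, s, hR X Y hr, hS Y Z hs, rfl⟩

lemma qComp_assoc (T : QRel μ ν c d) (S : QRel κ μ b c) (R : QRel ι κ a b) :
    qComp (qComp T S) R = qComp T (qComp S R) := by
  funext X W
  apply le_antisymm
  · apply Submodule.span_le.2
    rintro t ⟨Y, r, u, hr, hu, rfl⟩
    induction hu using Submodule.span_induction with
    | mem v hv =>
      obtain ⟨Z, s, t', hs, ht', rfl⟩ := hv
      rw [Matrix.mul_assoc]
      exact mul_mem_qComp (mul_mem_qComp hr hs) ht'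
    | zero => simpa using (qComp T (qComp S R) X W).zero_mem
    | add v w _ _ hv hw => rw [Matrix.add_mul]; exact Submodule.add_mem _ hv hw
    | smul cc v _ hv => simpa [Matrix.smul_mul] using Submodule.smul_mem _ cc hv
  · apply Submodule.span_le.2
    rintro t ⟨Z, m, t', hm, ht', rfl⟩
    induction hm using Submodule.span_induction with
    | mem v hv =>
      obtain ⟨Y, r, s, hr, hs, rfl⟩ := hv
      rw [← Matrix.mul_assoc]
      exact mul_mem_qComp hr (mul_mem_qComp hs ht')
    | zero => simpa using (qComp (qComp T S) R X W).zero_mem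
    | add v w _ _ hv hw => rw [Matrix.mul_add]; exact Submodule.add_mem _ hv hw
    | smul cc v _ hv => simpa [Matrix.mul_smul] using Submodule.smul_mem _ cc hv

lemma one_mem_qId (X : ι) : (1 : Matrix (Fin (a X)) (Fin (a X)) ℂ) ∈ qId ι a X X :=
  Submodule.subset_span ⟨rfl, fun i j => by simp [Matrix.one_apply, Fin.ext_iff]⟩

lemma qId_eq_bot {X X' : ι} (h : X ≠ X') : qId ι a X X' = ⊥ := by
  apply le_bot_iff.1
  apply Submodule.span_le.2
  rintro m ⟨rfl, -⟩
  exact absurd rfl h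

lemma mem_qId_diag {X : ι} {m : Matrix (Fin (a X)) (Fin (a X)) ℂ}
    (hm : m ∈ qId ι a X X) : ∃ cc : ℂ, m = cc • 1 := by
  have : qId ι a X X = Submodule.span ℂ {(1 : Matrix (Fin (a X)) (Fin (a X)) ℂ)} := by
    unfold qId
    congr 1
    ext n
    constructor
    · rintro ⟨-, h⟩
      ext i j
      rw [h i j, Matrix.one_apply]
      simp [Fin.ext_iff]
    · rintro rfl
      exact ⟨rfl, fun i j => by simp [Matrix.one_apply, Fin.ext_iff]⟩
  rw [this, Submodule.mem_span_singleton] at hm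
  obtain ⟨cc, rfl⟩ := hm
  exact ⟨cc, rfl⟩

lemma qComp_qId (R : QRel ι κ a b) : qComp R (qId ι a) = R := by
  funext X Z
  apply le_antisymm
  · apply Submodule.span_le.2
    rintro t ⟨Y, r, s, hr, hs, rfl⟩
    by_cases h : X = Y
    · subst h
      obtain ⟨cc, rfl⟩ := mem_qId_diag hr
      simpa [Matrix.mul_smul] using (R X Z).smul_mem cc hs
    · rw [qId_eq_bot h, Submodule.mem_bot] at hr
      subst hr
      simpa using (R X Z).zero_mem
  · intro r hr
    simpa using mul_mem_qComp (one_mem_qId X) hr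

lemma qId_qComp (R : QRel ι κ a b) : qComp (qId κ b) R = R := by
  funext X Z
  apply le_antisymm
  · apply Submodule.span_le.2
    rintro t ⟨Y, r, s, hr, hs, rfl⟩
    by_cases h : Y = Z
    · subst h
      obtain ⟨cc, rfl⟩ := mem_qId_diag hs
      simpa [Matrix.smul_mul] using (R X _).smul_mem cc hr
    · rw [qId_eq_bot h, Submodule.mem_bot] at hs
      subst hs
      simpa using (R X Z).zero_mem
  · intro r hr
    simpa using mul_mem_qComp hr (one_mem_qId Z)

lemma mem_qAdj {R : QRel ι κ a b} {Y : κ} {X : ι}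
    {g : Matrix (Fin (a X)) (Fin (b Y)) ℂ} : g ∈ qAdj R Y X ↔ gᴴ ∈ R X Y := Iff.rfl

lemma qAdj_mono {R R' : QRel ι κ a b} (h : R ≤ R') : qAdj R ≤ qAdj R' :=
  fun Y X _ hg => h X Y hg

lemma qAdj_qAdj (R : QRel ι κ a b) : qAdj (qAdj R) = R := by
  funext X Y
  ext g
  simp [qAdj]

lemma conjTranspose_mem_qComp {S : QRel κ μ b c} {R : QRel ι κ a b} {X : ι} {Z : μ}
    {h : Matrix (Fin (c Z)) (Fin (a X)) ℂ} (hh : h ∈ qComp S R X Z) :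
    hᴴ ∈ qComp (qAdj R) (qAdj S) Z X := by
  induction hh using Submodule.span_induction with
  | mem v hv =>
    obtain ⟨Y, r, s, hr, hs, rfl⟩ := hv
    rw [Matrix.conjTranspose_mul]
    exact mul_mem_qComp (show sᴴ ∈ qAdj S Z Y by simpa [mem_qAdj])
      (show rᴴ ∈ qAdj R Y X by simpa [mem_qAdj])
  | zero => simpa using (qComp (qAdj R) (qAdj S) Z X).zero_mem
  | add v w _ _ hv hw => simpa [Matrix.conjTranspose_add] using Submodule.add_mem _ hv hw
  | smul cc v _ hv =>
    simpa [Matrix.conjTranspose_smul] using Submodule.smul_mem _ (star cc) hv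

lemma qAdj_qComp (S : QRel κ μ b c) (R : QRel ι κ a b) :
    qAdj (qComp S R) = qComp (qAdj R) (qAdj S) := by
  funext Z X
  ext g
  constructor
  · intro hg
    simpa using conjTranspose_mem_qComp (mem_qAdj.1 hg)
  · intro hg
    rw [mem_qAdj]
    have := conjTranspose_mem_qComp hg
    rwa [qAdj_qAdj, qAdj_qAdj] at this

end Lemmas

/-- For a quantum poset `(𝒳,R)` and any quantum set `𝒲`, the relation
`F ⊑ G ⟺ G ≤ R∘F` is a partial order on functions `𝒲 → 𝒳`. -/
theorem qFunLE_partialOrder {ι κ : Type} {a : ι → ℕ} {b : κ → ℕ}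
    (R : QRel κ κ b b) (hR : qIsOrder R) :
    (∀ F : QRel ι κ a b, qIsFunc F → qFunLE R F F) ∧
    (∀ F G H : QRel ι κ a b, qIsFunc F → qIsFunc G → qIsFunc H →
      qFunLE R F G → qFunLE R G H → qFunLE R F H) ∧
    (∀ F G : QRel ι κ a b, qIsFunc F → qIsFunc G →
      qFunLE R F G → qFunLE R G F → F = G) := by
  obtain ⟨hrefl, htrans, hanti⟩ := hR
  refine ⟨?_, ?_, ?_⟩
  · intro F _
    show F ≤ qComp R F
    exact le_trans (le_of_eq (qId_qComp F).symm) (qComp_mono hrefl le_rfl)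
  · intro F G H _ _ _ hFG hGH
    show H ≤ qComp R F
    calc H ≤ qComp R G := hGH
      _ ≤ qComp R (qComp R F) := qComp_mono le_rfl hFG
      _ = qComp (qComp R R) F := (qComp_assoc R R F).symm
      _ ≤ qComp R F := qComp_mono htrans le_rfl
  · intro F G hF hG hFG hGF
    have hA : qComp F (qAdj G) ≤ R := by
      calc qComp F (qAdj G) ≤ qComp (qComp R G) (qAdj G) := qComp_mono hGF le_rfl
        _ = qComp R (qComp G (qAdj G)) := qComp_assoc R G (qAdj G)
        _ ≤ qComp R (qId κ b) := qComp_mono le_rfl hG.1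
        _ = R := qComp_qId R
    have hB : qComp G (qAdj F) ≤ R := by
      calc qComp G (qAdj F) ≤ qComp (qComp R F) (qAdj F) := qComp_mono hFG le_rfl
        _ = qComp R (qComp F (qAdj F)) := qComp_assoc R F (qAdj F)
        _ ≤ qComp R (qId κ b) := qComp_mono le_rfl hF.1
        _ = R := qComp_qId R
    have hA' : qComp F (qAdj G) ≤ qAdj R := by
      have := qAdj_mono hB
      rwa [qAdj_qComp, qAdj_qAdj] at this
    have hB' : qComp G (qAdj F) ≤ qAdj R := by
      have := qAdj_mono hA
      rwa [qAdj_qComp, qAdj_qAdj] at this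
    have hAI : qComp F (qAdj G) ≤ qId κ b := le_trans (le_inf hA hA') hanti
    have hBI : qComp G (qAdj F) ≤ qId κ b := le_trans (le_inf hB hB') hanti
    have h1 : F ≤ G := by
      calc F = qComp F (qId ι a) := (qComp_qId F).symm
        _ ≤ qComp F (qComp (qAdj G) G) := qComp_mono le_rfl hG.2
        _ = qComp (qComp F (qAdj G)) G := (qComp_assoc F (qAdj G) G).symm
        _ ≤ qComp (qId κ b) G := qComp_mono hAI le_rfl
        _ = G := qId_qComp G
    have h2 : G ≤ F := by
      calc G = qComp G (qId ι a) := (qComp_qId G).symm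
        _ ≤ qComp G (qComp (qAdj F) F) := qComp_mono le_rfl hF.2
        _ = qComp (qComp G (qAdj F)) F := (qComp_assoc G (qAdj F) F).symm
        _ ≤ qComp (qId κ b) F := qComp_mono hBI le_rfl
        _ = F := qId_qComp F
    exact le_antisymm h1 h2
end
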